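/- (Condition C0 and value for two qubit states.) Let {(q_1, ρ_1), (q_2, ρ_2)} be an ensemble of two qubit states with q_1 ≥ q_2, Bloch vectors v_1, v_2, e_2 = q_1 − q_2, s_2 = q_2 v_2 − q_1 v_1 ≠ 0, and l_2 = ‖s_2‖₂. Then every optimal 2-outcome POVM has both elements nonzero if and only if l_2 > e_2; and in that case p_guess = q_1 + (l_2 − e_2)/2 = (1 + ‖q_1 v_1 − q_2 v_2‖₂)/2. -/

import Mathlib

/-!
Write `ρᵢ = (1 + vᵢ·σ)/2` and `w = q₀v₀ - q₁v₁`. The success probability of a POVM `(M, 1 - M)`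
is `q₁ + tr(Δ M)` with `Δ = q₀ρ₀ - q₁ρ₁ = λ₊ P₊ + λ₋ P₋`, where `P± = (1 ± ŵ·σ)/2` are
complementary rank-one projectors and `λ± = (q₀ - q₁ ± ‖w‖)/2`. As `tr(P± M) ∈ [0, 1]`, the
optimum is `q₁ + λ₊` (measure along `ŵ`) when `λ₋ < 0`, and `q₀` (always guess `ρ₀`) when
`λ₋ ≥ 0`. The trivial measurements `(1, 0)` and `(0, 1)` succeed with probability `q₀` and `q₁`,
which is strictly suboptimal exactly in the first regime.
-/

open Matrix
open scoped ComplexOrder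

noncomputable section

/-- The Pauli matrix σ_X. -/
def sigmaX : Matrix (Fin 2) (Fin 2) ℂ := !![0, 1; 1, 0]

/-- The Pauli matrix σ_Y. -/
def sigmaY : Matrix (Fin 2) (Fin 2) ℂ := !![0, -Complex.I; Complex.I, 0]

/-- The Pauli matrix σ_Z. -/
def sigmaZ : Matrix (Fin 2) (Fin 2) ℂ := !![1, 0; 0, -1]

/-- `v · σ = v₁ σ_X + v₂ σ_Y + v₃ σ_Z` for a vector `v ∈ ℝ³`. -/
def pauliDot (v : EuclideanSpace ℝ (Fin 3)) : Matrix (Fin 2) (Fin 2) ℂ :=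
  (v 0 : ℂ) • sigmaX + (v 1 : ℂ) • sigmaY + (v 2 : ℂ) • sigmaZ

/-- A qubit state: a 2×2 complex positive semidefinite matrix with trace 1. -/
def IsQubitState (ρ : Matrix (Fin 2) (Fin 2) ℂ) : Prop :=
  ρ.PosSemidef ∧ ρ.trace = 1

/-- An `N`-outcome POVM: positive semidefinite matrices summing to the identity. -/
def IsPOVM {N : ℕ} (M : Fin N → Matrix (Fin 2) (Fin 2) ℂ) : Prop :=
  (∀ i, (M i).PosSemidef) ∧ ∑ i, M i = 1

/-- The guessing probability of the ensemble `{(q i, ρ i)}`: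
the supremum over all `N`-outcome POVMs of `∑ i, q i · Re (tr (ρ i * M i))`. -/
def pGuess {N : ℕ} (q : Fin N → ℝ) (ρ : Fin N → Matrix (Fin 2) (Fin 2) ℂ) : ℝ :=
  sSup {x : ℝ | ∃ M : Fin N → Matrix (Fin 2) (Fin 2) ℂ,
    IsPOVM M ∧ x = ∑ i, q i * ((ρ i * M i).trace).re}

/-- A POVM is optimal when it attains the guessing probability. -/
def IsOptimalPOVM {N : ℕ} (q : Fin N → ℝ) (ρ M : Fin N → Matrix (Fin 2) (Fin 2) ℂ) : Prop :=
  IsPOVM M ∧ ∑ i, q i * ((ρ i * M i).trace).re = pGuess q ρ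

section TraceInequalities

variable {n : Type*} [Fintype n] [DecidableEq n] {A B : Matrix n n ℂ}

theorem Matrix.PosSemidef.trace_mul_nonneg (hA : A.PosSemidef) (hB : B.PosSemidef) :
    0 ≤ (A * B).trace := by
  open scoped MatrixOrder in
  obtain ⟨C, rfl⟩ := CStarAlgebra.nonneg_iff_eq_star_mul_self.mp hA.nonneg
  rw [star_eq_conjTranspose, Matrix.mul_assoc, trace_mul_comm]
  exact (hB.mul_mul_conjTranspose_same C).trace_nonneg

theorem Matrix.PosSemidef.re_trace_mul_le (hA : A.PosSemidef) (hB : (1 - B).PosSemidef) :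
    (A * B).trace.re ≤ A.trace.re := by
  have h := (Complex.le_def.mp (hA.trace_mul_nonneg hB)).1
  rw [Matrix.mul_sub, Matrix.mul_one, trace_sub, Complex.sub_re, Complex.zero_re] at h
  linarith

end TraceInequalities

section Pauli

theorem pauliDot_eq (v : EuclideanSpace ℝ (Fin 3)) :
    pauliDot v = !![(v 2 : ℂ), v 0 - v 1 * Complex.I; v 0 + v 1 * Complex.I, -(v 2 : ℂ)] := by
  ext i j
  fin_cases i <;> fin_cases j <;> simp [pauliDot, sigmaX, sigmaY, sigmaZ]; ring

theorem trace_pauliDot (v : EuclideanSpace ℝ (Fin 3)) : (pauliDot v).trace = 0 := by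
  rw [pauliDot_eq, trace_fin_two_of]
  ring

theorem isHermitian_pauliDot (v : EuclideanSpace ℝ (Fin 3)) : (pauliDot v).IsHermitian := by
  rw [pauliDot_eq]
  ext i j
  fin_cases i <;> fin_cases j <;> simp [conjTranspose_apply, Complex.ext_iff]

theorem pauliDot_mul_self (v : EuclideanSpace ℝ (Fin 3)) :
    pauliDot v * pauliDot v = ((‖v‖ ^ 2 : ℝ) : ℂ) • 1 := by
  rw [EuclideanSpace.norm_sq_eq, Fin.sum_univ_three, pauliDot_eq]
  ext i j
  fin_cases i <;> fin_cases j <;>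
    simp [mul_apply, Fin.sum_univ_two, sq_abs] <;>
    first | ring1 | linear_combination (-(v 1 : ℂ) ^ 2) * Complex.I_sq

theorem pauliDot_smul (a : ℝ) (v : EuclideanSpace ℝ (Fin 3)) :
    pauliDot (a • v) = (a : ℂ) • pauliDot v := by
  simp only [pauliDot, PiLp.smul_apply, smul_eq_mul, Complex.ofReal_mul]
  module

theorem pauliDot_sub (u v : EuclideanSpace ℝ (Fin 3)) :
    pauliDot (u - v) = pauliDot u - pauliDot v := by
  simp only [pauliDot, PiLp.sub_apply, Complex.ofReal_sub]
  module

theorem pauliDot_neg (v : EuclideanSpace ℝ (Fin 3)) : pauliDot (-v) = -pauliDot v := by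
  simp only [pauliDot, PiLp.neg_apply, Complex.ofReal_neg]
  module

end Pauli

section Bloch

def blochMatrix (v : EuclideanSpace ℝ (Fin 3)) : Matrix (Fin 2) (Fin 2) ℂ :=
  (2⁻¹ : ℂ) • (1 + pauliDot v)

theorem trace_blochMatrix (v : EuclideanSpace ℝ (Fin 3)) : (blochMatrix v).trace = 1 := by
  rw [blochMatrix, trace_smul, trace_add, trace_one, trace_pauliDot]
  norm_num

theorem isHermitian_blochMatrix (v : EuclideanSpace ℝ (Fin 3)) : (blochMatrix v).IsHermitian :=
  (isHermitian_one.add (isHermitian_pauliDot v)).smul (by simp [isSelfAdjoint_iff])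

theorem blochMatrix_add_blochMatrix_neg (v : EuclideanSpace ℝ (Fin 3)) :
    blochMatrix v + blochMatrix (-v) = 1 := by
  rw [blochMatrix, blochMatrix, pauliDot_neg]
  module

variable {u : EuclideanSpace ℝ (Fin 3)}

theorem blochMatrix_mul_self (hu : ‖u‖ = 1) : blochMatrix u * blochMatrix u = blochMatrix u := by
  have hX : pauliDot u * pauliDot u = 1 := by simp [pauliDot_mul_self, hu]
  rw [blochMatrix, smul_mul_smul_comm, add_mul, mul_add, mul_add, one_mul, mul_one, one_mul, hX]
  module

theorem posSemidef_blochMatrix (hu : ‖u‖ = 1) : (blochMatrix u).PosSemidef := by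
  rw [← blochMatrix_mul_self hu]
  nth_rewrite 1 [← (isHermitian_blochMatrix u).eq]
  exact posSemidef_conjTranspose_mul_self _

theorem blochMatrix_neg_mul_blochMatrix (hu : ‖u‖ = 1) :
    blochMatrix (-u) * blochMatrix u = 0 := by
  rw [eq_sub_of_add_eq' (blochMatrix_add_blochMatrix_neg u), sub_mul, one_mul,
    blochMatrix_mul_self hu, sub_self]

end Bloch

section TwoOutcome

def successProb {N : ℕ} (q : Fin N → ℝ) (ρ M : Fin N → Matrix (Fin 2) (Fin 2) ℂ) : ℝ :=
  ∑ i, q i * ((ρ i * M i).trace).re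

theorem pGuess_eq_of_forall_le {N : ℕ} {q : Fin N → ℝ} {ρ M : Fin N → Matrix (Fin 2) (Fin 2) ℂ}
    {c : ℝ} (hle : ∀ M', IsPOVM M' → successProb q ρ M' ≤ c) (hM : IsPOVM M)
    (hc : successProb q ρ M = c) : pGuess q ρ = c :=
  IsGreatest.csSup_eq ⟨⟨M, hM, hc.symm⟩, by rintro _ ⟨M', hM', rfl⟩; exact hle M' hM'⟩

variable {q : Fin 2 → ℝ} {ρ M : Fin 2 → Matrix (Fin 2) (Fin 2) ℂ}

theorem IsPOVM.snd_eq_one_sub (hM : IsPOVM M) : M 1 = 1 - M 0 :=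
  eq_sub_of_add_eq' (by simpa [Fin.sum_univ_two] using hM.2)

theorem isPOVM_one_zero : IsPOVM ![(1 : Matrix (Fin 2) (Fin 2) ℂ), 0] :=
  ⟨Fin.forall_fin_two.mpr ⟨PosSemidef.one, PosSemidef.zero⟩, by simp [Fin.sum_univ_two]⟩

theorem successProb_eq (hM : IsPOVM M) :
    successProb q ρ M =
      q 1 * (ρ 1).trace.re + (((q 0 : ℂ) • ρ 0 - (q 1 : ℂ) • ρ 1) * M 0).trace.re := by
  rw [successProb, Fin.sum_univ_two, hM.snd_eq_one_sub, sub_mul, smul_mul, smul_mul, trace_sub,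
    trace_smul, trace_smul, Matrix.mul_sub, Matrix.mul_one, trace_sub]
  simp only [smul_eq_mul, Complex.sub_re, Complex.re_ofReal_mul]
  ring

theorem successProb_one_zero (hρ : ∀ i, (ρ i).trace = 1) :
    successProb q ρ ![1, 0] = q 0 := by
  simp [successProb, Fin.sum_univ_two, hρ]

theorem IsOptimalPOVM.ne_zero (hM : IsOptimalPOVM q ρ M) (hρ : ∀ i, (ρ i).trace = 1)
    (h₀ : q 0 < pGuess q ρ) (h₁ : q 1 < pGuess q ρ) : M 0 ≠ 0 ∧ M 1 ≠ 0 := by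
  have hval : successProb q ρ M = pGuess q ρ := hM.2
  rw [successProb_eq hM.1] at hval
  constructor
  · intro h
    simp only [h, hρ, Complex.one_re, mul_one, mul_zero, trace_zero, Complex.zero_re,
      add_zero] at hval
    linarith
  · intro h
    rw [hM.1.snd_eq_one_sub, sub_eq_zero] at h
    simp only [← h, hρ, Complex.one_re, mul_one, Complex.coe_smul, trace_sub, trace_smul,
      Complex.real_smul, Complex.sub_re, Complex.ofReal_re, add_sub_cancel] at hval
    linarith

end TwoOutcome

section Helstrom

variable {q : Fin 2 → ℝ} {v : Fin 2 → EuclideanSpace ℝ (Fin 3)} {u : EuclideanSpace ℝ (Fin 3)}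
  {r : ℝ} {M : Fin 2 → Matrix (Fin 2) (Fin 2) ℂ}

theorem smul_blochMatrix_sub_smul_blochMatrix (hw : q 0 • v 0 - q 1 • v 1 = r • u) :
    (q 0 : ℂ) • blochMatrix (v 0) - (q 1 : ℂ) • blochMatrix (v 1) =
      (((q 0 - q 1 + r) / 2 : ℝ) : ℂ) • blochMatrix u +
        (((q 0 - q 1 - r) / 2 : ℝ) : ℂ) • blochMatrix (-u) := by
  have hX : (q 0 : ℂ) • pauliDot (v 0) - (q 1 : ℂ) • pauliDot (v 1) = (r : ℂ) • pauliDot u := by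
    rw [← pauliDot_smul, ← pauliDot_smul, ← pauliDot_sub, hw, pauliDot_smul]
  simp only [blochMatrix, pauliDot_neg]
  push_cast
  linear_combination (norm := module) (2⁻¹ : ℂ) • hX

theorem successProb_blochMatrix (hw : q 0 • v 0 - q 1 • v 1 = r • u) (hM : IsPOVM M) :
    successProb q (fun i => blochMatrix (v i)) M =
      q 1 + (q 0 - q 1 + r) / 2 * (blochMatrix u * M 0).trace.re +
        (q 0 - q 1 - r) / 2 * (blochMatrix (-u) * M 0).trace.re := by
  rw [successProb_eq hM, trace_blochMatrix, smul_blochMatrix_sub_smul_blochMatrix hw, add_mul,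
    smul_mul, smul_mul, trace_add, trace_smul, trace_smul]
  simp only [smul_eq_mul, Complex.add_re, Complex.re_ofReal_mul, Complex.one_re]
  ring

theorem re_trace_blochMatrix_mul_mem_Icc (hu : ‖u‖ = 1) (hM : IsPOVM M) :
    (blochMatrix u * M 0).trace.re ∈ Set.Icc 0 1 := by
  have hP := posSemidef_blochMatrix hu
  refine ⟨(Complex.le_def.mp (hP.trace_mul_nonneg (hM.1 0))).1, ?_⟩
  simpa [trace_blochMatrix] using hP.re_trace_mul_le (hM.snd_eq_one_sub ▸ hM.1 1)

theorem isPOVM_blochMatrix_blochMatrix_neg (hu : ‖u‖ = 1) :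
    IsPOVM ![blochMatrix u, blochMatrix (-u)] :=
  ⟨Fin.forall_fin_two.mpr ⟨posSemidef_blochMatrix hu, posSemidef_blochMatrix (by rwa [norm_neg])⟩,
    by simpa [Fin.sum_univ_two] using blochMatrix_add_blochMatrix_neg u⟩

theorem pGuess_blochMatrix_of_abs_le (hu : ‖u‖ = 1) (hw : q 0 • v 0 - q 1 • v 1 = r • u)
    (hr : |q 0 - q 1| ≤ r) :
    pGuess q (fun i => blochMatrix (v i)) = q 1 + (q 0 - q 1 + r) / 2 := by
  obtain ⟨hr₁, hr₂⟩ := abs_le.mp hr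
  have hM₀ := isPOVM_blochMatrix_blochMatrix_neg hu
  refine pGuess_eq_of_forall_le (fun M hM => ?_) hM₀ ?_
  · obtain ⟨ha₀, ha₁⟩ := re_trace_blochMatrix_mul_mem_Icc hu hM
    obtain ⟨hb₀, hb₁⟩ := re_trace_blochMatrix_mul_mem_Icc (u := -u) (by rwa [norm_neg]) hM
    rw [successProb_blochMatrix hw hM]
    nlinarith
  · rw [successProb_blochMatrix hw hM₀]
    simp [blochMatrix_mul_self hu, blochMatrix_neg_mul_blochMatrix hu, trace_blochMatrix]

theorem pGuess_blochMatrix_of_le (hu : ‖u‖ = 1) (hw : q 0 • v 0 - q 1 • v 1 = r • u)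
    (hr : |r| ≤ q 0 - q 1) :
    pGuess q (fun i => blochMatrix (v i)) = q 0 := by
  obtain ⟨hr₁, hr₂⟩ := abs_le.mp hr
  refine pGuess_eq_of_forall_le (fun M hM => ?_) isPOVM_one_zero
    (successProb_one_zero fun i => trace_blochMatrix (v i))
  obtain ⟨ha₀, ha₁⟩ := re_trace_blochMatrix_mul_mem_Icc hu hM
  obtain ⟨hb₀, hb₁⟩ := re_trace_blochMatrix_mul_mem_Icc (u := -u) (by rwa [norm_neg]) hM
  rw [successProb_blochMatrix hw hM]
  nlinarith

end Helstrom

/-- Lean indices `0, 1` play the roles of the paper's indices `1, 2`. -/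
theorem condC0_two_states_general
    (q : Fin 2 → ℝ) (v : Fin 2 → EuclideanSpace ℝ (Fin 3))
    (ρ : Fin 2 → Matrix (Fin 2) (Fin 2) ℂ)
    (hqsum : ∑ i, q i = 1)
    (hρ : ∀ i, ρ i = (2⁻¹ : ℂ) • (1 + pauliDot (v i)))
    (hmax : q 1 ≤ q 0)
    (e₂ : ℝ) (he : e₂ = q 0 - q 1)
    (s₂ : EuclideanSpace ℝ (Fin 3)) (hs : s₂ = q 1 • v 1 - q 0 • v 0)
    (hs0 : s₂ ≠ 0)
    (l₂ : ℝ) (hl : l₂ = ‖s₂‖) :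
    ((∀ M : Fin 2 → Matrix (Fin 2) (Fin 2) ℂ,
        IsOptimalPOVM q ρ M → M 0 ≠ 0 ∧ M 1 ≠ 0) ↔ e₂ < l₂) ∧
    (e₂ < l₂ →
      pGuess q ρ = q 0 + (l₂ - e₂) / 2 ∧
      q 0 + (l₂ - e₂) / 2 = (1 + ‖q 0 • v 0 - q 1 • v 1‖) / 2) := by
  obtain rfl : ρ = fun i => blochMatrix (v i) := funext hρ
  set w := q 0 • v 0 - q 1 • v 1
  have hsw : s₂ = -w := by rw [hs, neg_sub]
  have hw : w ≠ 0 := by rwa [hsw, neg_ne_zero] at hs0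
  obtain rfl : l₂ = ‖w‖ := by rw [hl, hsw, norm_neg]
  subst he
  have hw₀ : 0 < ‖w‖ := norm_pos_iff.mpr hw
  have hu : ‖‖w‖⁻¹ • w‖ = 1 := norm_smul_inv_norm hw
  have hwu : w = ‖w‖ • ‖w‖⁻¹ • w := (smul_inv_smul₀ hw₀.ne' w).symm
  have htr : ∀ i, (blochMatrix (v i)).trace = 1 := fun i => trace_blochMatrix (v i)
  have hpg : q 0 - q 1 < ‖w‖ →
      pGuess q (fun i => blochMatrix (v i)) = q 1 + (q 0 - q 1 + ‖w‖) / 2 := fun h =>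
    pGuess_blochMatrix_of_abs_le hu hwu (abs_le.mpr ⟨by linarith, h.le⟩)
  have hsum : q 0 + q 1 = 1 := by simpa [Fin.sum_univ_two] using hqsum
  refine ⟨⟨fun hopt => ?_, fun h M hM => ?_⟩, fun h => ⟨by rw [hpg h]; ring, by linarith⟩⟩
  · by_contra! hle
    have hpg' := pGuess_blochMatrix_of_le hu hwu (by rwa [abs_of_pos hw₀])
    exact (hopt _ ⟨isPOVM_one_zero, (successProb_one_zero htr).trans hpg'.symm⟩).2 rfl
  · exact hM.ne_zero htr (by rw [hpg h]; linarith) (by rw [hpg h]; linarith)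

/-- Condition C0 and value for two qubit states. Lean indices
`0, 1` play the roles of paper indices `1, 2`, so `q 0 ≥ q 1`,
`e₂ = q 0 - q 1`, `s₂ = q 1 • v 1 - q 0 • v 0` and `l₂ = ‖s₂‖`. -/
theorem condC0_two_states
    (q : Fin 2 → ℝ) (v : Fin 2 → EuclideanSpace ℝ (Fin 3))
    (ρ : Fin 2 → Matrix (Fin 2) (Fin 2) ℂ)
    (hq : ∀ i, 0 < q i) (hqsum : ∑ i, q i = 1)
    (hv : ∀ i, ‖v i‖ ≤ 1)
    (hρ : ∀ i, ρ i = (2⁻¹ : ℂ) • (1 + pauliDot (v i)))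
    (hmax : q 1 ≤ q 0)
    (e₂ : ℝ) (he : e₂ = q 0 - q 1)
    (s₂ : EuclideanSpace ℝ (Fin 3)) (hs : s₂ = q 1 • v 1 - q 0 • v 0)
    (hs0 : s₂ ≠ 0)
    (l₂ : ℝ) (hl : l₂ = ‖s₂‖) :
    ((∀ M : Fin 2 → Matrix (Fin 2) (Fin 2) ℂ,
        IsOptimalPOVM q ρ M → M 0 ≠ 0 ∧ M 1 ≠ 0) ↔ e₂ < l₂) ∧
    (e₂ < l₂ →
      pGuess q ρ = q 0 + (l₂ - e₂) / 2 ∧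
      q 0 + (l₂ - e₂) / 2 = (1 + ‖q 0 • v 0 - q 1 • v 1‖) / 2) :=
  condC0_two_states_general q v ρ hqsum hρ hmax e₂ he s₂ hs hs0 l₂ hl
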